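/- For every fixed integer D ≥ 1, the number Dyck(m,D) of Dyck words of length 2m and height at most D satisfies lim_{m→∞} Dyck(m,D)^{1/(2m)} = 2·cos(π/(D+2)). -/

import Mathlib

/-- The four-letter DNA alphabet. -/
inductive DNA | A | T | G | C
deriving DecidableEq

/-- Hamming distance between two words (of equal length) given as lists. -/
def hammingD {α : Type*} [DecidableEq α] (x y : List α) : ℕ :=
  (x.zip y).countP (fun p => decide (p.1 ≠ p.2))

/-- A binary word has `D`-bounded running digital sum if in every prefix the
numbers of ones and zeros differ by at most `D`. -/
def brds (D : ℕ) (w : List Bool) : Prop :=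
  ∀ k ≤ w.length,
    (((w.take k).count true : ℤ) - ((w.take k).count false : ℤ)).natAbs ≤ D

/-- The letters `G`, `C` of the DNA alphabet. -/
def isGC : DNA → Bool
  | DNA.G => true
  | DNA.C => true
  | _ => false

/-- A DNA word is `D`-GC-prefix-balanced if in every prefix the number of
letters from {G,C} and the number of letters from {A,T} differ by at most `D`. -/
def gcpb (D : ℕ) (w : List DNA) : Prop :=
  ∀ k ≤ w.length,
    (((w.take k).countP isGC : ℤ) - ((w.take k).countP (fun c => !(isGC c)) : ℤ)).natAbs ≤ D

/-- A word is self-uncorrelated if no proper nonempty prefix equals the suffix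
of the same length. -/
def selfUncorr {α : Type*} (w : List α) : Prop :=
  ∀ k, 1 ≤ k → k ≤ w.length - 1 → w.take k ≠ w.drop (w.length - k)

/-- A set of words is mutually uncorrelated if every word is self-uncorrelated
and for every ordered pair of distinct words `x`, `y` no nonempty prefix of `y`
equals a suffix of `x` of the same length. -/
def mutUncorr {α : Type*} (S : Set (List α)) : Prop :=
  (∀ w ∈ S, selfUncorr w) ∧
  ∀ x ∈ S, ∀ y ∈ S, x ≠ y →
    ∀ k, 1 ≤ k → k ≤ x.length → y.take k ≠ x.drop (x.length - k)

/-- A Dyck word: equal numbers of ones and zeros, and every prefix has at least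
as many ones as zeros. -/
def isDyck (w : List Bool) : Prop :=
  w.count true = w.count false ∧
  ∀ k ≤ w.length, (w.take k).count false ≤ (w.take k).count true

/-- The height of a (Dyck) word is at most `D`: in every prefix the number of
ones exceeds the number of zeros by at most `D`. -/
def heightLe (D : ℕ) (w : List Bool) : Prop :=
  ∀ k ≤ w.length, ((w.take k).count true : ℤ) - ((w.take k).count false : ℤ) ≤ (D : ℤ)

/-- `dyckCount m D`: the number of Dyck words of length `2m` of height at most `D`. -/
noncomputable def dyckCount (m D : ℕ) : ℕ :=
  Set.ncard {w : List Bool | w.length = 2 * m ∧ isDyck w ∧ heightLe D w}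

namespace S9

/-- signed sum: #true - #false -/
def sfun (w : List Bool) : ℤ := (w.count true : ℤ) - (w.count false : ℤ)

@[simp] lemma sfun_nil : sfun [] = 0 := by simp [sfun]

lemma sfun_concat (w : List Bool) (b : Bool) :
    sfun (w ++ [b]) = sfun w + (if b then 1 else -1) := by
  cases b <;> simp [sfun, List.count_append] <;> ring

def okSet (D n : ℕ) (j : ℤ) : Set (List Bool) :=
  {w | w.length = n ∧ (∀ k ≤ n, 0 ≤ sfun (w.take k) ∧ sfun (w.take k) ≤ (D : ℤ)) ∧ sfun w = j}

lemma okSet_finite (D n : ℕ) (j : ℤ) : (okSet D n j).Finite :=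
  (List.finite_length_eq Bool n).subset fun _ h => h.1

noncomputable def f (D n : ℕ) (j : ℤ) : ℕ := (okSet D n j).ncard

lemma f_eq_zero_of_lt (D n : ℕ) {j : ℤ} (h : j < 0) : f D n j = 0 := by
  have : okSet D n j = ∅ := by
    ext w
    simp only [okSet, Set.mem_setOf_eq, Set.mem_empty_iff_false, iff_false]
    rintro ⟨hl, hpre, hj⟩
    have := (hpre n le_rfl).1
    rw [List.take_of_length_le hl.le] at this
    omega
  simp [f, this]

lemma f_eq_zero_of_gt (D n : ℕ) {j : ℤ} (h : (D : ℤ) < j) : f D n j = 0 := by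
  have : okSet D n j = ∅ := by
    ext w
    simp only [okSet, Set.mem_setOf_eq, Set.mem_empty_iff_false, iff_false]
    rintro ⟨hl, hpre, hj⟩
    have := (hpre n le_rfl).2
    rw [List.take_of_length_le hl.le] at this
    omega
  simp [f, this]

lemma f_zero (D : ℕ) (j : ℤ) : f D 0 j = if j = 0 then 1 else 0 := by
  have : okSet D 0 j = if j = 0 then {([] : List Bool)} else ∅ := by
    split_ifs with h
    · subst h
      ext w
      simp only [okSet, Set.mem_setOf_eq, Set.mem_singleton_iff]
      constructor
      · rintro ⟨hl, -, -⟩; exact List.length_eq_zero_iff.mp hl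
      · rintro rfl
        refine ⟨rfl, ?_, by simp⟩
        intro k hk
        interval_cases k <;> simp
    · ext w
      simp only [okSet, Set.mem_setOf_eq, Set.mem_empty_iff_false, iff_false]
      rintro ⟨hl, -, hj⟩
      rw [List.length_eq_zero_iff.mp hl] at hj
      simp at hj
      exact h hj.symm
  rw [f, this]
  split_ifs <;> simp

lemma okSet_succ (D n : ℕ) (j : ℤ) (h0 : 0 ≤ j) (hd : j ≤ (D : ℤ)) :
    okSet D (n + 1) j =
      ((· ++ [true]) '' okSet D n (j - 1)) ∪ ((· ++ [false]) '' okSet D n (j + 1)) := by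
  ext w
  constructor
  · rintro ⟨hl, hpre, hj⟩
    have hne : w ≠ [] := by intro h; rw [h] at hl; simp at hl
    obtain ⟨u, b, rfl⟩ : ∃ u b, w = u ++ [b] :=
      ⟨w.dropLast, w.getLast hne, (List.dropLast_append_getLast hne).symm⟩
    have hul : u.length = n := by simpa using hl
    have hsu : sfun (u ++ [b]) = j := hj
    rw [sfun_concat] at hsu
    have hpre' : ∀ k ≤ n, 0 ≤ sfun (u.take k) ∧ sfun (u.take k) ≤ (D : ℤ) := by
      intro k hk
      have := hpre k (by omega)
      rwa [List.take_append_of_le_length (by omega)] at this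
    cases b with
    | true =>
      left
      exact ⟨u, ⟨hul, hpre', by simp at hsu; omega⟩, rfl⟩
    | false =>
      right
      exact ⟨u, ⟨hul, hpre', by simp at hsu; omega⟩, rfl⟩
  · rintro (⟨u, ⟨hl, hpre, hj⟩, rfl⟩ | ⟨u, ⟨hl, hpre, hj⟩, rfl⟩) <;>
    · refine ⟨by simp [hl], ?_, by rw [sfun_concat]; simp; omega⟩
      intro k hk
      rcases Nat.lt_or_ge k (n + 1) with h | h
      · rw [List.take_append_of_le_length (by omega)]
        exact hpre k (by omega)
      · have hk1 : k = n + 1 := by omega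
        rw [hk1, List.take_of_length_le (by simp [hl])]
        rw [sfun_concat]
        simp
        omega

lemma f_succ (D n : ℕ) (j : ℤ) (h0 : 0 ≤ j) (hd : j ≤ (D : ℤ)) :
    f D (n + 1) j = f D n (j - 1) + f D n (j + 1) := by
  rw [f, okSet_succ D n j h0 hd,
    Set.ncard_union_eq ?_ (((okSet_finite D n (j-1)).image _)) ((okSet_finite D n (j+1)).image _),
    Set.ncard_image_of_injective _ (fun a b h => by simpa using h),
    Set.ncard_image_of_injective _ (fun a b h => by simpa using h)]
  · rfl
  · rw [Set.disjoint_left]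
    rintro w ⟨u, -, rfl⟩ ⟨v, -, hv⟩
    have := congrArg (fun l => l.getLast?) hv
    simp at this

lemma f_ge_one (D : ℕ) (hD : 1 ≤ D) :
    ∀ m : ℕ, ∀ j : ℤ, 0 ≤ j → j ≤ (m : ℤ) → j ≤ (D : ℤ) → (j + m) % 2 = 0 → 1 ≤ f D m j := by
  intro m
  induction m with
  | zero =>
    intro j h0 hm hd hp
    have : j = 0 := by omega
    simp [this, f_zero]
  | succ m ih =>
    intro j h0 hm hd hp
    push_cast at hm hp
    rcases eq_or_lt_of_le h0 with h | h
    · rw [← h] at hp ⊢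
      rw [f_succ D m 0 le_rfl (by positivity)]
      have hz : f D m (0 - 1) = 0 := f_eq_zero_of_lt _ _ (by norm_num)
      have := ih (0 + 1) (by omega) (by push_cast; omega) (by omega) (by push_cast; omega)
      omega
    · rw [f_succ D m j h0 hd]
      have := ih (j - 1) (by omega) (by push_cast; omega) (by omega) (by push_cast; omega)
      omega

noncomputable def th (D : ℕ) : ℝ := Real.pi / (D + 2)
noncomputable def lam (D : ℕ) : ℝ := 2 * Real.cos (th D)
noncomputable def v (D : ℕ) (j : ℤ) : ℝ := Real.sin ((j + 1) * th D)

lemma th_pos (D : ℕ) : 0 < th D := by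
  have : (0:ℝ) < (D:ℝ) + 2 := by positivity
  exact div_pos Real.pi_pos this

lemma th_le (D : ℕ) (hD : 1 ≤ D) : th D ≤ Real.pi / 3 := by
  apply div_le_div_of_nonneg_left Real.pi_pos.le (by norm_num)
  have : (1:ℝ) ≤ (D:ℝ) := by exact_mod_cast hD
  linarith

lemma lam_ge_one (D : ℕ) (hD : 1 ≤ D) : 1 ≤ lam D := by
  have h1 : Real.cos (Real.pi / 3) ≤ Real.cos (th D) := by
    apply Real.cos_le_cos_of_nonneg_of_le_pi (th_pos D).le
    · linarith [Real.pi_pos, th_le D hD]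
    · exact th_le D hD
  rw [Real.cos_pi_div_three] at h1
  unfold lam; linarith

lemma lam_pos (D : ℕ) (hD : 1 ≤ D) : 0 < lam D := lt_of_lt_of_le one_pos (lam_ge_one D hD)

lemma v_neg_one (D : ℕ) : v D (-1) = 0 := by simp [v]

lemma v_top (D : ℕ) : v D ((D:ℤ) + 1) = 0 := by
  have : ((((D:ℤ) + 1 : ℤ) : ℝ) + 1) * th D = Real.pi := by
    push_cast
    unfold th; field_simp
    ring
  rw [v, this, Real.sin_pi]

lemma v_pos (D : ℕ) {j : ℤ} (h0 : 0 ≤ j) (hd : j ≤ (D:ℤ)) : 0 < v D j := by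
  apply Real.sin_pos_of_pos_of_lt_pi
  · have : (1:ℝ) ≤ ((j:ℝ) + 1) := by
      have : (0:ℝ) ≤ (j:ℝ) := by exact_mod_cast h0
      linarith
    nlinarith [th_pos D]
  · have hj : ((j:ℝ) + 1) ≤ (D:ℝ) + 1 := by
      have : (j:ℝ) ≤ (D:ℝ) := by exact_mod_cast hd
      linarith
    have h2 : ((j:ℝ) + 1) * th D < ((D:ℝ) + 2) * th D := by
      apply mul_lt_mul_of_pos_right _ (th_pos D)
      linarith
    have : ((D:ℝ) + 2) * th D = Real.pi := by unfold th; field_simp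
    linarith

lemma v_nonneg (D : ℕ) {j : ℤ} (h0 : -1 ≤ j) (hd : j ≤ (D:ℤ) + 1) : 0 ≤ v D j := by
  rcases eq_or_lt_of_le h0 with h | h
  · rw [← h, v_neg_one]
  rcases eq_or_lt_of_le hd with h2 | h2
  · rw [h2, v_top]
  · exact (v_pos D (by omega) (by omega)).le

lemma v_le_one (D : ℕ) (j : ℤ) : v D j ≤ 1 := Real.sin_le_one _

lemma v_rec (D : ℕ) (j : ℤ) : v D (j - 1) + v D (j + 1) = lam D * v D j := by
  have e1 : ((j:ℝ) - 1 + 1) * th D = ((j:ℝ) + 1) * th D - th D := by ring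
  have e2 : ((j:ℝ) + 1 + 1) * th D = ((j:ℝ) + 1) * th D + th D := by ring
  simp only [v, lam]
  push_cast
  rw [e1, e2, Real.sin_sub, Real.sin_add]
  ring

lemma f_ub (D : ℕ) (hD : 1 ≤ D) :
    ∀ m : ℕ, ∀ j : ℤ, -1 ≤ j → j ≤ (D:ℤ) + 1 → (f D m j : ℝ) * v D 0 ≤ lam D ^ m * v D j := by
  intro m
  induction m with
  | zero =>
    intro j h0 hd
    rcases eq_or_ne j 0 with rfl | h
    · simp [f_zero]
    · rw [f_zero]
      simp only [Nat.cast_zero, zero_mul, pow_zero, one_mul, if_neg h, Nat.cast_ofNat,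
        CharP.cast_eq_zero]
      exact v_nonneg D h0 hd
  | succ m ih =>
    intro j h0 hd
    rcases eq_or_lt_of_le h0 with h | h
    · rw [← h, v_neg_one, f_eq_zero_of_lt D _ (by norm_num)]
      simp
    rcases eq_or_lt_of_le hd with h2 | h2
    · rw [h2, v_top, f_eq_zero_of_gt D _ (by omega)]
      simp
    have hj0 : 0 ≤ j := by omega
    have hjd : j ≤ (D:ℤ) := by omega
    rw [f_succ D m j hj0 hjd]
    push_cast
    calc ((f D m (j-1) : ℝ) + (f D m (j+1) : ℝ)) * v D 0
        = (f D m (j-1) : ℝ) * v D 0 + (f D m (j+1) : ℝ) * v D 0 := by ring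
      _ ≤ lam D ^ m * v D (j-1) + lam D ^ m * v D (j+1) := by
          gcongr ?_ + ?_
          · exact ih (j-1) (by omega) (by omega)
          · exact ih (j+1) (by omega) (by omega)
      _ = lam D ^ m * (v D (j-1) + v D (j+1)) := by ring
      _ = lam D ^ (m+1) * v D j := by rw [v_rec]; ring

lemma f_lb (D : ℕ) (hD : 1 ≤ D) :
    ∀ m : ℕ, ∀ j : ℤ, -1 ≤ j → j ≤ (D:ℤ) + 1 → (j + D + m) % 2 = 0 →
      lam D ^ (D + m) * v D j ≤ lam D ^ (D + 1) * (f D (D + m) j : ℝ) := by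
  intro m
  induction m with
  | zero =>
    intro j h0 hd hp
    rcases eq_or_lt_of_le h0 with h | h
    · rw [← h, v_neg_one]
      have : (0:ℝ) ≤ lam D ^ (D+1) * (f D (D+0) (-1) : ℝ) :=
        mul_nonneg (pow_nonneg (lam_pos D hD).le _) (Nat.cast_nonneg _)
      simpa using this
    rcases eq_or_lt_of_le hd with h2 | h2
    · rw [h2, v_top]
      have : (0:ℝ) ≤ lam D ^ (D+1) * (f D (D+0) ((D:ℤ)+1) : ℝ) :=
        mul_nonneg (pow_nonneg (lam_pos D hD).le _) (Nat.cast_nonneg _)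
      simpa using this
    have hf : 1 ≤ f D (D + 0) j := by
      apply f_ge_one D hD _ j (by omega) (by push_cast; omega) (by omega) (by push_cast at hp ⊢; omega)
    have hf' : (1:ℝ) ≤ (f D (D+0) j : ℝ) := by exact_mod_cast hf
    calc lam D ^ (D + 0) * v D j ≤ lam D ^ (D + 0) * 1 := by
          gcongr
          · exact pow_nonneg (lam_pos D hD).le _
          · exact v_le_one D j
      _ ≤ lam D ^ (D + 1) * 1 := by
          gcongr
          · exact lam_ge_one D hD
          · omega
      _ ≤ lam D ^ (D + 1) * (f D (D+0) j : ℝ) := by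
          gcongr
          exact pow_nonneg (lam_pos D hD).le _
  | succ m ih =>
    intro j h0 hd hp
    rcases eq_or_lt_of_le h0 with h | h
    · rw [← h, v_neg_one]
      have : (0:ℝ) ≤ lam D ^ (D+1) * (f D (D+(m+1)) (-1) : ℝ) :=
        mul_nonneg (pow_nonneg (lam_pos D hD).le _) (Nat.cast_nonneg _)
      simpa using this
    rcases eq_or_lt_of_le hd with h2 | h2
    · rw [h2, v_top]
      have : (0:ℝ) ≤ lam D ^ (D+1) * (f D (D+(m+1)) ((D:ℤ)+1) : ℝ) :=
        mul_nonneg (pow_nonneg (lam_pos D hD).le _) (Nat.cast_nonneg _)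
      simpa using this
    have hj0 : 0 ≤ j := by omega
    have hjd : j ≤ (D:ℤ) := by omega
    have hstep : D + (m + 1) = (D + m) + 1 := by omega
    rw [hstep, f_succ D (D + m) j hj0 hjd]
    push_cast
    calc lam D ^ ((D + m) + 1) * v D j
        = lam D ^ (D + m) * (v D (j-1) + v D (j+1)) := by rw [v_rec]; ring
      _ = lam D ^ (D + m) * v D (j-1) + lam D ^ (D + m) * v D (j+1) := by ring
      _ ≤ lam D ^ (D+1) * (f D (D+m) (j-1) : ℝ) + lam D ^ (D+1) * (f D (D+m) (j+1) : ℝ) := by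
          gcongr ?_ + ?_
          · exact ih (j-1) (by omega) (by omega) (by push_cast at hp ⊢; omega)
          · exact ih (j+1) (by omega) (by omega) (by push_cast at hp ⊢; omega)
      _ = lam D ^ (D+1) * ((f D (D+m) (j-1) : ℝ) + (f D (D+m) (j+1) : ℝ)) := by ring

lemma dyck_eq (m D : ℕ) : dyckCount m D = f D (2*m) 0 := by
  have hset : {w : List Bool | w.length = 2*m ∧ isDyck w ∧ heightLe D w} = okSet D (2*m) 0 := by
    ext w
    simp only [okSet, Set.mem_setOf_eq, isDyck, heightLe, sfun]
    constructor
    · rintro ⟨hl, ⟨hc, hpre⟩, hh⟩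
      refine ⟨hl, fun k hk => ⟨?_, hh k (by omega)⟩, ?_⟩
      · have := hpre k (by omega)
        omega
      · omega
    · rintro ⟨hl, hpre, h0⟩
      refine ⟨hl, ⟨?_, fun k hk => ?_⟩, fun k hk => (hpre k (by omega)).2⟩
      · have := h0
        omega
      · have := (hpre k (by omega)).1
        omega
  rw [dyckCount, hset]; rfl

lemma dyck_upper (D m : ℕ) (hD : 1 ≤ D) : (dyckCount m D : ℝ) ≤ lam D ^ (2*m) := by
  have h := f_ub D hD (2*m) 0 (by norm_num) (by positivity)
  rw [← dyck_eq m D] at h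
  have hv0 : 0 < v D 0 := v_pos D le_rfl (by positivity)
  have := (mul_le_mul_iff_of_pos_right hv0).mp h
  exact this

lemma dyck_lower (D m : ℕ) (hD : 1 ≤ D) (hm : D ≤ 2*m) :
    lam D ^ (2*m) * v D 0 ≤ lam D ^ (D+1) * (dyckCount m D : ℝ) := by
  have hdm : D + (2*m - D) = 2*m := by omega
  have h := f_lb D hD (2*m - D) 0 (by norm_num) (by positivity) (by push_cast; omega)
  rw [hdm] at h
  rw [← dyck_eq m D] at h
  exact h

lemma pow_rpow_inv (L : ℝ) (hL : 0 ≤ L) {m : ℕ} (hm : 1 ≤ m) :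
    ((L ^ (2*m)) : ℝ) ^ ((1:ℝ)/(2*(m:ℝ))) = L := by
  have hm' : (0:ℝ) < (m:ℝ) := by exact_mod_cast hm
  have h2m : (2*(m:ℝ)) ≠ 0 := by positivity
  rw [← Real.rpow_natCast L (2*m), ← Real.rpow_mul hL]
  push_cast
  rw [mul_one_div, div_self h2m, Real.rpow_one]

lemma aux_tendsto_one (C : ℝ) (hC : 0 < C) :
    Filter.Tendsto (fun m : ℕ => C ^ ((1:ℝ)/(2*(m:ℝ)))) Filter.atTop (nhds 1) := by
  have h0 : Filter.Tendsto (fun m : ℕ => (1:ℝ)/(2*(m:ℝ))) Filter.atTop (nhds 0) := by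
    have h := tendsto_one_div_atTop_nhds_zero_nat.mul_const (1/2 : ℝ)
    rw [zero_mul] at h
    convert h using 2 with m
    rw [one_div_mul_one_div, mul_comm]
  have hrw : ∀ x : ℝ, C ^ x = Real.exp (Real.log C * x) := fun x => Real.rpow_def_of_pos hC x
  simp only [hrw]
  have := (Real.continuous_exp.tendsto (Real.log C * 0)).comp (h0.const_mul (Real.log C))
  simpa [Function.comp_def] using this

end S9


/-- for fixed `D ≥ 1`,
`Dyck(m,D)^{1/(2m)} → 2 cos(π/(D+2))` as `m → ∞`. -/
theorem stmt9 (D : ℕ) (hD : 1 ≤ D) :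
    Filter.Tendsto
      (fun m : ℕ => (dyckCount m D : ℝ) ^ ((1 : ℝ) / (2 * (m : ℝ))))
      Filter.atTop
      (nhds (2 * Real.cos (Real.pi / ((D : ℝ) + 2)))) := by
  open S9 in
  have hlam : 2 * Real.cos (Real.pi / ((D : ℝ) + 2)) = lam D := rfl
  rw [hlam]
  set L := S9.lam D with hLdef
  have hL1 : 1 ≤ L := S9.lam_ge_one D hD
  have hL0 : 0 < L := S9.lam_pos D hD
  have hv0 : 0 < S9.v D 0 := S9.v_pos D le_rfl (by positivity)
  set C : ℝ := S9.v D 0 / L ^ (D+1) with hCdef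
  have hC : 0 < C := by positivity
  -- lower sequence tends to L
  have hlow : Filter.Tendsto (fun m : ℕ => C ^ ((1:ℝ)/(2*(m:ℝ))) * L) Filter.atTop (nhds L) := by
    have := (S9.aux_tendsto_one C hC).mul_const L
    simpa using this
  apply tendsto_of_tendsto_of_tendsto_of_le_of_le' hlow tendsto_const_nhds
  · -- eventually lower bound
    filter_upwards [Filter.eventually_ge_atTop (max 1 D)] with m hm
    have hm1 : 1 ≤ m := le_trans (le_max_left 1 D) hm
    have hmD : D ≤ 2*m := by
      have := le_trans (le_max_right 1 D) hm; omega
    have hlb : C * L ^ (2*m) ≤ (dyckCount m D : ℝ) := by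
      have h := S9.dyck_lower D m hD hmD
      rw [div_mul_eq_mul_div, div_le_iff₀ (by positivity)]
      calc S9.v D 0 * L ^ (2*m) = L ^ (2*m) * S9.v D 0 := by ring
        _ ≤ L ^ (D+1) * (dyckCount m D : ℝ) := h
        _ = (dyckCount m D : ℝ) * L ^ (D+1) := by ring
    calc C ^ ((1:ℝ)/(2*(m:ℝ))) * L
        = C ^ ((1:ℝ)/(2*(m:ℝ))) * (L ^ (2*m)) ^ ((1:ℝ)/(2*(m:ℝ))) := by
          rw [S9.pow_rpow_inv L hL0.le hm1]
      _ = (C * L ^ (2*m)) ^ ((1:ℝ)/(2*(m:ℝ))) := by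
          rw [← Real.mul_rpow hC.le (by positivity)]
      _ ≤ (dyckCount m D : ℝ) ^ ((1:ℝ)/(2*(m:ℝ))) :=
          Real.rpow_le_rpow (by positivity) hlb (by positivity)
  · -- eventually upper bound
    filter_upwards [Filter.eventually_ge_atTop 1] with m hm1
    calc (dyckCount m D : ℝ) ^ ((1:ℝ)/(2*(m:ℝ)))
        ≤ (L ^ (2*m)) ^ ((1:ℝ)/(2*(m:ℝ))) :=
          Real.rpow_le_rpow (Nat.cast_nonneg _) (S9.dyck_upper D m hD) (by positivity)
      _ = L := S9.pow_rpow_inv L hL0.le hm1
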